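/- Let P ∈ ℤ[X] have nonnegative coefficients, nonzero constant term, and P(1) = 9. Then P factors uniquely into irreducibles in the monoid of polynomials with nonnegative integer coefficients, up to ordering of the factors. -/

import Mathlib

/-!
An irreducible factor `Q` of `P` has `Q(0) ≠ 0`, `Q(1) ≥ 2` and `Q(1) ∣ 9`, so a factorization of `P`
is either `[P]` or a pair `1 + X^a₁ + X^a₂`, `1 + X^b₁ + X^b₂` with `a₁ ≤ a₂`, `b₁ ≤ b₂`. Such a pair is
recovered from its product: the lowest exponent of `P - 1` is `min a₁ b₁`, the degree is `a₂ + b₂`, and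
`P'(1) = 3 (a₁ + a₂ + b₁ + b₂)`, so the small exponents agree. Writing the factors as `U + X^x`, `V + X^y`
and `U + X^x'`, `V + X^y'` with `x + y = x' + y'` and `x < x'`, cancelling `X^(x' - x) - 1` from the
difference of the expanded products leaves `X^y' U = X^x V`, which forces the two factors to be swapped.
-/

open Polynomial

def NNcoeff (P : Polynomial ℤ) : Prop := ∀ n, 0 ≤ P.coeff n

def IrredNN (P : Polynomial ℤ) : Prop :=
  NNcoeff P ∧ P ≠ 1 ∧
    ∀ S T : Polynomial ℤ, NNcoeff S → NNcoeff T → P = S * T → S = 1 ∨ T = 1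

namespace NNcoeff

variable {P Q : ℤ[X]}

theorem X_pow (n : ℕ) : NNcoeff (X ^ n) := fun k => by
  rw [coeff_X_pow]; split_ifs <;> norm_num

theorem add (hP : NNcoeff P) (hQ : NNcoeff Q) : NNcoeff (P + Q) := fun n => by
  rw [coeff_add]; exact add_nonneg (hP n) (hQ n)

theorem mul (hP : NNcoeff P) (hQ : NNcoeff Q) : NNcoeff (P * Q) := fun n => by
  rw [coeff_mul]; exact Finset.sum_nonneg fun x _ => mul_nonneg (hP _) (hQ _)

theorem coeff_le_eval_one (hP : NNcoeff P) (n : ℕ) : P.coeff n ≤ P.eval 1 := by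
  rw [eval_eq_sum_range]
  simp only [one_pow, mul_one]
  by_cases hn : n < P.natDegree + 1
  · exact Finset.single_le_sum (fun i _ => hP i) (Finset.mem_range.mpr hn)
  · rw [coeff_eq_zero_of_natDegree_lt (by omega)]
    exact Finset.sum_nonneg fun i _ => hP i

theorem eq_zero_of_eval_one_eq_zero (hP : NNcoeff P) (h : P.eval 1 = 0) : P = 0 := by
  ext n
  have := hP.coeff_le_eval_one n
  have := hP n
  simp only [coeff_zero]
  omega

theorem sub_X_pow (hP : NNcoeff P) {n : ℕ} (hn : P.coeff n ≠ 0) : NNcoeff (P - X ^ n) := fun k => by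
  have := hP k
  rw [coeff_sub, coeff_X_pow]
  split_ifs with h
  · subst h; omega
  · simpa using this

theorem sub_X_pow_natDegree (hP : NNcoeff P) (h : P ≠ 0) : NNcoeff (P - X ^ P.natDegree) :=
  hP.sub_X_pow (leadingCoeff_ne_zero.mpr h)

theorem X_pow_dvd_left (hP : NNcoeff P) (hQ : NNcoeff Q) {t : ℕ} (h : X ^ t ∣ P + Q) :
    X ^ t ∣ P := by
  rw [X_pow_dvd_iff] at h ⊢
  intro d hd
  have := h d hd
  have := hP d
  have := hQ d
  rw [coeff_add] at *
  omega

theorem two_le_eval_one (hP : NNcoeff P) (h0 : P.coeff 0 ≠ 0) (h1 : P ≠ 1) : 2 ≤ P.eval 1 := by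
  have hR : NNcoeff (P - X ^ 0) := hP.sub_X_pow h0
  have hR1 : 0 ≤ (P - X ^ 0).eval 1 := (hR 0).trans (hR.coeff_le_eval_one 0)
  by_contra! hlt
  refine h1 (sub_eq_zero.mp (hR.eq_zero_of_eval_one_eq_zero ?_))
  simp only [eval_sub, eval_pow, eval_X, one_pow] at hR1 ⊢
  omega

-- "Trinomial" stands for `1 + X ^ a + X ^ b`, where `0`, `a` and `b` may coincide.
theorem exists_eq_trinomial (hP : NNcoeff P) (h0 : P.coeff 0 ≠ 0) (h3 : P.eval 1 = 3) :
    ∃ a b, a ≤ b ∧ P = 1 + X ^ a + X ^ b := by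
  set R := P - X ^ 0
  have hR : NNcoeff R := hP.sub_X_pow h0
  have hR0 : R ≠ 0 := fun h => by simpa [R, h3] using congrArg (eval 1) h
  set S := R - X ^ R.natDegree
  have hS : NNcoeff S := hR.sub_X_pow_natDegree hR0
  have hS0 : S ≠ 0 := fun h => by simpa [S, R, h3] using congrArg (eval 1) h
  have hT : S - X ^ S.natDegree = 0 :=
    (hS.sub_X_pow_natDegree hS0).eq_zero_of_eval_one_eq_zero (by simp [S, R, h3])
  refine ⟨S.natDegree, R.natDegree, ?_, ?_⟩
  · simpa using natDegree_sub_le R (X ^ R.natDegree)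
  · linear_combination hT

end NNcoeff

theorem trinomial_ne_zero (a b : ℕ) : (1 + X ^ a + X ^ b : ℤ[X]) ≠ 0 := fun h => by
  simpa using congrArg (eval 1) h

theorem natDegree_trinomial {a b : ℕ} (h : a ≤ b) : (1 + X ^ a + X ^ b : ℤ[X]).natDegree = b := by
  apply natDegree_eq_of_le_of_coeff_ne_zero
  · refine natDegree_add_le_of_degree_le (natDegree_add_le_of_degree_le ?_ ?_) ?_ <;> simp [h]
  · simp only [coeff_add, coeff_one, coeff_X_pow, if_true]
    split_ifs <;> omega

theorem eval_one_derivative_trinomial (a b : ℕ) :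
    (derivative (1 + X ^ a + X ^ b : ℤ[X])).eval 1 = a + b := by
  simp [derivative_X_pow]

theorem X_pow_dvd_trinomial_mul_sub_one_iff {a₁ a₂ b₁ b₂ : ℕ} (ha : a₁ ≤ a₂) (hb : b₁ ≤ b₂)
    (t : ℕ) :
    X ^ t ∣ (1 + X ^ a₁ + X ^ a₂) * (1 + X ^ b₁ + X ^ b₂) - (1 : ℤ[X]) ↔ t ≤ min a₁ b₁ := by
  set A : ℤ[X] := X ^ a₁ + X ^ a₂
  set B : ℤ[X] := X ^ b₁ + X ^ b₂
  have hA : NNcoeff A := (NNcoeff.X_pow _).add (NNcoeff.X_pow _)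
  have hB : NNcoeff B := (NNcoeff.X_pow _).add (NNcoeff.X_pow _)
  have hexpand : (1 + X ^ a₁ + X ^ a₂) * (1 + X ^ b₁ + X ^ b₂) - 1 = A + B + A * B := by ring
  have hX : ∀ s, (X : ℤ[X]) ^ t ∣ X ^ s ↔ t ≤ s := fun s => pow_dvd_pow_iff X_ne_zero not_isUnit_X
  rw [hexpand, le_min_iff]
  constructor
  · intro h
    constructor
    · rw [← hX]
      refine (NNcoeff.X_pow a₁).X_pow_dvd_left (((NNcoeff.X_pow a₂).add hB).add (hA.mul hB)) ?_
      convert h using 1; ring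
    · rw [← hX]
      refine (NNcoeff.X_pow b₁).X_pow_dvd_left (((NNcoeff.X_pow b₂).add hA).add (hA.mul hB)) ?_
      convert h using 1; ring
  · rintro ⟨h₁, h₂⟩
    have hdA : X ^ t ∣ A := dvd_add ((hX _).2 h₁) ((hX _).2 (h₁.trans ha))
    have hdB : X ^ t ∣ B := dvd_add ((hX _).2 h₂) ((hX _).2 (h₂.trans hb))
    exact dvd_add (dvd_add hdA hdB) (dvd_mul_of_dvd_left hdA B)

theorem X_pow_mul_eq_of_mul_eq {R : Type*} [CommRing R] [IsDomain R] {U V : R[X]}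
    {x y x' y' : ℕ} (hsum : x + y = x' + y') (hlt : x < x')
    (h : (U + X ^ x) * (V + X ^ y) = (U + X ^ x') * (V + X ^ y')) : X ^ y' * U = X ^ x * V := by
  obtain ⟨k, rfl⟩ := Nat.exists_eq_add_of_lt hlt
  obtain rfl : y = y' + k + 1 := by omega
  have hk : (X ^ (k + 1) - 1 : R[X]) ≠ 0 := X_pow_sub_C_ne_zero (Nat.succ_pos k) 1
  refine mul_right_cancel₀ hk ?_
  linear_combination h

theorem X_pow_mul_one_add_X_pow_inj {p q α β : ℕ}
    (h : (X ^ p * (1 + X ^ α) : ℤ[X]) = X ^ q * (1 + X ^ β)) : p = q ∧ α = β := by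
  rw [mul_add, mul_add, mul_one, mul_one, ← pow_add, ← pow_add] at h
  have := congrArg toFinsupp h
  simp only [toFinsupp_add, toFinsupp_X_pow] at this
  rw [AddMonoidAlgebra.single_add_single_inj one_ne_zero one_ne_zero] at this
  omega

theorem perm_of_trinomial_mul_eq {a₁ a₂ b₁ b₂ c₁ c₂ d₁ d₂ : ℕ}
    (ha : a₁ ≤ a₂) (hb : b₁ ≤ b₂) (hc : c₁ ≤ c₂) (hd : d₁ ≤ d₂)
    (h : (1 + X ^ a₁ + X ^ a₂) * (1 + X ^ b₁ + X ^ b₂) =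
      ((1 + X ^ c₁ + X ^ c₂) * (1 + X ^ d₁ + X ^ d₂) : ℤ[X])) :
    [1 + X ^ a₁ + X ^ a₂, 1 + X ^ b₁ + X ^ b₂].Perm
      [(1 + X ^ c₁ + X ^ c₂ : ℤ[X]), 1 + X ^ d₁ + X ^ d₂] := by
  wlog hab : a₁ ≤ b₁ generalizing a₁ a₂ b₁ b₂
  · exact (List.Perm.swap _ _ []).trans (this hb ha ((mul_comm _ _).trans h) (by omega))
  wlog hcd : c₁ ≤ d₁ generalizing c₁ c₂ d₁ d₂
  · exact (this hd hc (h.trans (mul_comm _ _)) (by omega)).trans (List.Perm.swap _ _ [])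
  have hlow : a₁ = c₁ := by
    have := eq_of_forall_le_iff fun t =>
      (X_pow_dvd_trinomial_mul_sub_one_iff ha hb t).symm.trans
        (h ▸ X_pow_dvd_trinomial_mul_sub_one_iff hc hd t)
    rwa [min_eq_left hab, min_eq_left hcd] at this
  have hdeg : a₂ + b₂ = c₂ + d₂ := by
    have := congrArg natDegree h
    rwa [natDegree_mul (trinomial_ne_zero _ _) (trinomial_ne_zero _ _),
      natDegree_mul (trinomial_ne_zero _ _) (trinomial_ne_zero _ _), natDegree_trinomial ha,
      natDegree_trinomial hb, natDegree_trinomial hc, natDegree_trinomial hd] at this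
  have hsum : a₁ + a₂ + b₁ + b₂ = c₁ + c₂ + d₁ + d₂ := by
    have := congrArg (fun P => (derivative P).eval 1) h
    simp only [derivative_mul, eval_add, eval_mul, eval_one_derivative_trinomial] at this
    norm_num at this
    omega
  obtain rfl := hlow
  obtain rfl : b₁ = d₁ := by omega
  rcases lt_trichotomy a₂ c₂ with hlt | rfl | hlt
  · obtain ⟨rfl, rfl⟩ := X_pow_mul_one_add_X_pow_inj
      (X_pow_mul_eq_of_mul_eq (U := 1 + X ^ a₁) (V := 1 + X ^ b₁) hdeg hlt h)
    obtain rfl : b₂ = c₂ := by omega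
    exact List.Perm.swap _ _ []
  · obtain rfl : b₂ = d₂ := by omega
    rfl
  · obtain ⟨rfl, rfl⟩ := X_pow_mul_one_add_X_pow_inj
      (X_pow_mul_eq_of_mul_eq (U := 1 + X ^ a₁) (V := 1 + X ^ b₁) hdeg.symm hlt h.symm)
    obtain rfl : a₂ = d₂ := by omega
    exact List.Perm.swap _ _ []

theorem coeff_zero_ne_zero_of_dvd {R : Type*} [CommSemiring R] {P Q : R[X]} (hdvd : Q ∣ P)
    (hP : P.coeff 0 ≠ 0) : Q.coeff 0 ≠ 0 := fun hQ => hP <| by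
  simpa [hQ] using map_dvd constantCoeff hdvd

namespace IrredNN

variable {P Q R : ℤ[X]}

theorem ne_mul (hP : IrredNN P) (hQ : IrredNN Q) (hR : IrredNN R) : P ≠ Q * R := fun h =>
  (hP.2.2 Q R hQ.1 hR.1 h).elim hQ.2.1 hR.2.1

theorem three_le_eval_one (hQ : IrredNN Q) (h0 : Q.coeff 0 ≠ 0) (h9 : Q.eval 1 ∣ 9) :
    3 ≤ Q.eval 1 := by
  have h2 := hQ.1.two_le_eval_one h0 hQ.2.1
  by_contra! hlt
  obtain h2 : Q.eval 1 = 2 := by omega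
  rw [h2] at h9
  norm_num at h9

end IrredNN

theorem eq_singleton_or_trinomial_pair {P : ℤ[X]} (hc : P.coeff 0 ≠ 0) (hsum : P.eval 1 = 9)
    {l : List ℤ[X]} (hl : ∀ Q ∈ l, IrredNN Q) (hprod : l.prod = P) :
    l = [P] ∨ ∃ a b c d, a ≤ b ∧ c ≤ d ∧ l = [1 + X ^ a + X ^ b, 1 + X ^ c + X ^ d] := by
  have key : ∀ Q ∈ l, Q.coeff 0 ≠ 0 ∧ 3 ≤ Q.eval 1 := fun Q hQ => by
    have hdvd : Q ∣ P := hprod ▸ List.dvd_prod hQ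
    have h0 := coeff_zero_ne_zero_of_dvd hdvd hc
    exact ⟨h0, (hl Q hQ).three_le_eval_one h0 (hsum ▸ map_dvd (evalRingHom 1) hdvd)⟩
  match l, hl, hprod, key with
  | [], _, hprod, _ => simp [← hprod] at hsum
  | [Q], _, hprod, _ => left; simpa using hprod
  | [Q, R], hl, hprod, key =>
    right
    obtain ⟨hQ0, hQ3⟩ := key Q (by simp)
    obtain ⟨hR0, hR3⟩ := key R (by simp)
    have h9 : Q.eval 1 * R.eval 1 = 9 := by simpa [← hprod] using hsum
    obtain ⟨a, b, hab, rfl⟩ := (hl Q (by simp)).1.exists_eq_trinomial hQ0 (by nlinarith)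
    obtain ⟨c, d, hcd, rfl⟩ := (hl R (by simp)).1.exists_eq_trinomial hR0 (by nlinarith)
    exact ⟨a, b, c, d, hab, hcd, rfl⟩
  | Q :: R :: S :: t, _, hprod, key =>
    have hdvd : Q * R * S ∣ P := by
      rw [← hprod]
      simpa [mul_assoc] using mul_dvd_mul_left Q (mul_dvd_mul_left R (dvd_mul_right S t.prod))
    have h9 : Q.eval 1 * R.eval 1 * S.eval 1 ∣ 9 := by
      simpa [hsum] using map_dvd (evalRingHom 1) hdvd
    have := Int.le_of_dvd (by norm_num) h9
    have hQ := (key Q (by simp)).2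
    have hR := (key R (by simp)).2
    have hS := (key S (by simp)).2
    nlinarith [mul_le_mul hQ hR (by norm_num) (by omega)]

theorem stmt19_general (P : Polynomial ℤ)
    (hc : P.coeff 0 ≠ 0) (hsum : P.eval 1 = 9) :
    ∀ l l' : List (Polynomial ℤ),
      (∀ Q ∈ l, IrredNN Q) → (∀ Q ∈ l', IrredNN Q) →
      l.prod = P → l'.prod = P → l.Perm l' := by
  intro l l' hl hl' hprod hprod'
  rcases eq_singleton_or_trinomial_pair hc hsum hl hprod with
    rfl | ⟨a, b, c, d, hab, hcd, rfl⟩ <;>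
  rcases eq_singleton_or_trinomial_pair hc hsum hl' hprod' with
    rfl | ⟨a', b', c', d', hab', hcd', rfl⟩
  · rfl
  · exact absurd (by simpa using hprod'.symm)
      ((hl P (by simp)).ne_mul (hl' _ (by simp)) (hl' _ (by simp)))
  · exact absurd (by simpa using hprod.symm)
      ((hl' P (by simp)).ne_mul (hl _ (by simp)) (hl _ (by simp)))
  · exact perm_of_trinomial_mul_eq hab hcd hab' hcd' (by simpa using hprod.trans hprod'.symm)

theorem stmt19 (P : Polynomial ℤ) (hP : ∀ n, 0 ≤ P.coeff n)
    (hc : P.coeff 0 ≠ 0) (hsum : P.eval 1 = 9) :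
    ∀ l l' : List (Polynomial ℤ),
      (∀ Q ∈ l, IrredNN Q) → (∀ Q ∈ l', IrredNN Q) →
      l.prod = P → l'.prod = P → l.Perm l' :=
  stmt19_general P hc hsum
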